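/- arXiv:2505.17271 — 4 statements merged into one kernel-verified Lean document; each statement's English description precedes it below -/
import Mathlib

section
/- Let B be a finite nonempty set of buyers, m : B → ℝ with m_b > 0 for every b and ∑_{b∈B} m_b = 1, M : B → ℝ with M_b ≥ m_b for every b, and R : B → ℝ with 0 ≤ R_b ≤ 1 for every b. Then there exists exactly one real number p ≥ 0 satisfying the market-clearing equation ∑_{b∈B} (M_b − max(0, p·R_b − M_b)) = p. -/
/-- Existence and uniqueness of the clearing price. -/
theorem clearing_price_existsUnique
    {B : Type*} [Fintype B] [Nonempty B]
    (m M R : B → ℝ)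
    (hm : ∀ b, 0 < m b) (hmsum : ∑ b, m b = 1)
    (hM : ∀ b, m b ≤ M b)
    (hR : ∀ b, 0 ≤ R b ∧ R b ≤ 1) :
    ∃! p : ℝ, 0 ≤ p ∧ ∑ b, (M b - max 0 (p * R b - M b)) = p := by
  set S : ℝ := ∑ b, M b with hS
  have hMpos : ∀ b, 0 < M b := fun b => lt_of_lt_of_le (hm b) (hM b)
  have hSpos : 0 < S := Finset.sum_pos (fun b _ => hMpos b) Finset.univ_nonempty
  set g : ℝ → ℝ := fun p => p + ∑ b, max 0 (p * R b - M b) with hg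
  have hmono : StrictMono g := by
    have hmono2 : Monotone fun p : ℝ => ∑ b, max 0 (p * R b - M b) := by
      intro x y hxy
      exact Finset.sum_le_sum fun b _ =>
        max_le_max le_rfl (by nlinarith [(hR b).1])
    exact strictMono_id.add_monotone hmono2
  have hcont : Continuous g := by
    apply continuous_id.add
    exact continuous_finset_sum _ fun b _ =>
      continuous_const.max ((continuous_id.mul continuous_const).sub continuous_const)
  have hg0 : g 0 = 0 := by
    simp only [hg, zero_mul, zero_sub, zero_add]
    rw [Finset.sum_eq_zero fun b _ => max_eq_left (by linarith [hMpos b])]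
  have hgS : S ≤ g S := by
    have : 0 ≤ ∑ b, max 0 (S * R b - M b) :=
      Finset.sum_nonneg fun b _ => le_max_left _ _
    simpa [hg] using this
  -- obtain p with g p = S by IVT
  obtain ⟨p, hpIcc, hpeq⟩ := intermediate_value_Icc hSpos.le hcont.continuousOn
    (show S ∈ Set.Icc (g 0) (g S) from ⟨by rw [hg0]; exact hSpos.le, hgS⟩)
  have key : ∀ q : ℝ, (∑ b, (M b - max 0 (q * R b - M b)) = q) ↔ g q = S := by
    intro q
    rw [Finset.sum_sub_distrib]
    constructor <;> intro h <;> simp only [hg] at * <;> linarith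
  refine ⟨p, ⟨hpIcc.1, (key p).mpr hpeq⟩, ?_⟩
  rintro q ⟨hq0, hqeq⟩
  exact hmono.injective (((key q).mp hqeq).trans hpeq.symm)
end

section
/- Let B be a finite nonempty set of buyers, m : B → ℝ with m_b > 0 for every b and ∑_{b∈B} m_b = 1, and R : B → ℝ with 0 ≤ R_b ≤ 1 for every b. Let M, M' : B → ℝ satisfy m_b ≤ M_b ≤ M'_b for every b, and let p and p' be the unique clearing prices for M and M' respectively. Then p ≤ p'; moreover, if M_{b₀} < M'_{b₀} for some buyer b₀, then p < p'. In particular, the clearing price is a strictly increasing function of each buyer's money holding (the other buyers' holdings being fixed). -/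
lemma term_le (x x' q q' c : ℝ) (hx : x ≤ x') (hq : q' ≤ q) (hc : 0 ≤ c) :
    x - max 0 (q*c - x) ≤ x' - max 0 (q'*c - x') := by
  have hqc : q' * c ≤ q * c := mul_le_mul_of_nonneg_right hq hc
  have h1 : (0:ℝ) ≤ max 0 (q*c - x) := le_max_left _ _
  have h2 : q*c - x ≤ max 0 (q*c - x) := le_max_right _ _
  rcases max_cases 0 (q'*c - x') with ⟨he, _⟩ | ⟨he, _⟩ <;> rw [he] <;> linarith

lemma term_lt (x x' q q' c : ℝ) (hx : x < x') (hq : q' ≤ q) (hc : 0 ≤ c) :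
    x - max 0 (q*c - x) < x' - max 0 (q'*c - x') := by
  have hqc : q' * c ≤ q * c := mul_le_mul_of_nonneg_right hq hc
  have h1 : (0:ℝ) ≤ max 0 (q*c - x) := le_max_left _ _
  have h2 : q*c - x ≤ max 0 (q*c - x) := le_max_right _ _
  rcases max_cases 0 (q'*c - x') with ⟨he, _⟩ | ⟨he, _⟩ <;> rw [he] <;> linarith

/-- Monotonicity of the clearing price in the money holdings:
weakly monotone, and strictly monotone if some buyer's money strictly increases. -/
theorem clearing_price_monotone
    {B : Type*} [Fintype B] [Nonempty B]
    (m R : B → ℝ)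
    (hm : ∀ b, 0 < m b) (hmsum : ∑ b, m b = 1)
    (hR : ∀ b, 0 ≤ R b ∧ R b ≤ 1)
    (M M' : B → ℝ)
    (hM : ∀ b, m b ≤ M b) (hMM' : ∀ b, M b ≤ M' b)
    (p p' : ℝ) (hp0 : 0 ≤ p) (hp'0 : 0 ≤ p')
    (hclear : ∑ b, (M b - max 0 (p * R b - M b)) = p)
    (hclear' : ∑ b, (M' b - max 0 (p' * R b - M' b)) = p') :
    p ≤ p' ∧ (∀ b₀, M b₀ < M' b₀ → p < p') := by
  constructor
  · by_contra h
    push_neg at h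
    have hs : ∑ b, (M b - max 0 (p * R b - M b)) ≤
        ∑ b, (M' b - max 0 (p' * R b - M' b)) :=
      Finset.sum_le_sum fun b _ => term_le _ _ _ _ _ (hMM' b) h.le (hR b).1
    linarith
  · intro b₀ hb₀
    by_contra h
    push_neg at h
    have hs : ∑ b, (M b - max 0 (p * R b - M b)) <
        ∑ b, (M' b - max 0 (p' * R b - M' b)) :=
      Finset.sum_lt_sum
        (fun b _ => term_le _ _ _ _ _ (hMM' b) h (hR b).1)
        ⟨b₀, Finset.mem_univ _, term_lt _ _ _ _ _ hb₀ h (hR b₀).1⟩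
    linarith
end

section
/- In the repeated-market (Greedy) dynamics, the sequence of clearing prices converges to 1, i.e., p^τ → 1 as τ → ∞. -/
lemma aux_min_sub (x c : ℝ) : x - max 0 (x - c) = min x c := by
  rcases le_total x c with h | h
  · rw [max_eq_left (by linarith), min_eq_left h]; ring
  · rw [max_eq_right (by linarith), min_eq_right h]; ring

lemma aux_swap (a x : ℝ) (hx : 0 ≤ x) :
    max 0 (a - max 0 (a - x)) = x - max 0 (x - max 0 a) := by
  rcases le_total a 0 with ha | ha
  · rw [max_eq_left ha, max_eq_left (by linarith : a - x ≤ 0)]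
    rw [show a - 0 = a by ring, show x - 0 = x by ring, max_eq_left ha,
      max_eq_right hx]
    ring
  · rw [max_eq_right ha]
    rcases le_total a x with h | h
    · rw [max_eq_left (by linarith : a - x ≤ 0), max_eq_right (by linarith : (0:ℝ) ≤ x - a)]
      rw [show a - 0 = a by ring, max_eq_right ha]
      ring
    · rw [max_eq_right (by linarith : (0:ℝ) ≤ a - x), max_eq_left (by linarith : x - a ≤ 0)]
      rw [show a - (a - x) = x by ring, max_eq_right hx]
      ring

set_option maxHeartbeats 1000000 in
/-- In the repeated-market (Greedy) dynamics, the sequence of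
clearing prices converges to 1. -/
theorem greedy_dynamics_price_tendsto_one
    {B : Type*} [Fintype B] [Nonempty B]
    (m R : B → ℝ)
    (hm : ∀ b, 0 < m b) (hmsum : ∑ b, m b = 1)
    (hR : ∀ b, 0 ≤ R b ∧ R b ≤ 1) (hRsum : ∑ b, R b = 1)
    (M : ℕ → B → ℝ) (p : ℕ → ℝ)
    (hM0 : ∀ b, m b ≤ M 0 b)
    (hp : ∀ τ, 0 ≤ p τ ∧ ∑ b, (M τ b - max 0 (p τ * R b - M τ b)) = p τ)
    (hupd : ∀ τ b, M (τ + 1) b = m b + max 0 (p τ * R b - M τ b)) :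
    Filter.Tendsto p Filter.atTop (nhds 1) := by
  classical
  -- basic positivity
  have hp0 : ∀ τ, 0 ≤ p τ := fun τ => (hp τ).1
  have hMge : ∀ τ b, m b ≤ M τ b := by
    intro τ
    cases τ with
    | zero => exact hM0
    | succ σ => intro b; rw [hupd σ b]; nlinarith [le_max_left 0 (p σ * R b - M σ b)]
  have hxnn : ∀ τ b, 0 ≤ M τ b - m b := fun τ b => by linarith [hMge τ b]
  set X : ℕ → ℝ := fun τ => ∑ b, (M τ b - m b) with hXdef
  have hXnn : ∀ τ, 0 ≤ X τ := by
    intro τ; simp only [hXdef]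
    exact Finset.sum_nonneg fun b _ => hxnn τ b
  have hMsum : ∀ τ, ∑ b, M τ b = 1 + X τ := by
    intro τ; simp only [hXdef]
    rw [Finset.sum_sub_distrib, hmsum]
    ring
  have hXsucc : ∀ τ, X (τ + 1) = ∑ b, max 0 (p τ * R b - M τ b) := by
    intro τ; simp only [hXdef]
    exact Finset.sum_congr rfl fun b _ => by rw [hupd τ b]; ring
  have hclear : ∀ τ, p τ = 1 + X τ - X (τ + 1) := by
    intro τ
    have h2 := (hp τ).2
    rw [Finset.sum_sub_distrib, hMsum τ, ← hXsucc τ] at h2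
    linarith
  -- E: excess money beyond current needs
  set E : ℕ → ℝ := fun τ => ∑ b, max 0 ((M τ b - m b) - max 0 (p τ * R b - m b)) with hEdef
  have hEnn : ∀ τ, 0 ≤ E τ := by
    intro τ; simp only [hEdef]
    exact Finset.sum_nonneg fun b _ => le_max_left 0 _
  -- key identity (F4)
  have hF4 : ∀ τ, ∑ b, max 0 (p τ * R b - M (τ + 1) b) = X τ - E τ := by
    intro τ
    have : ∀ b, max 0 (p τ * R b - M (τ + 1) b)
        = (M τ b - m b) - max 0 ((M τ b - m b) - max 0 (p τ * R b - m b)) := by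
      intro b
      have h1 : p τ * R b - M (τ + 1) b
          = (p τ * R b - m b) - max 0 ((p τ * R b - m b) - (M τ b - m b)) := by
        rw [hupd τ b]; ring_nf
      rw [h1, aux_swap (p τ * R b - m b) (M τ b - m b) (hxnn τ b)]
    rw [Finset.sum_congr rfl fun b _ => this b, Finset.sum_sub_distrib]
  -- clearing function g
  set g : ℕ → ℝ → ℝ := fun τ t => t + ∑ b, max 0 (t * R b - M τ b) with hgdef
  have hgroot : ∀ τ, g τ (p τ) = 1 + X τ := by
    intro τ; simp only [hgdef]
    rw [← hXsucc τ]
    linarith [hclear τ]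
  have hgPeval : ∀ τ, g (τ + 1) (p τ) = p τ + X τ - E τ := by
    intro τ; simp only [hgdef]
    rw [hF4 τ]; ring
  have hgmono : ∀ τ (s t : ℝ), s ≤ t →
      t - s ≤ g τ t - g τ s ∧ g τ t - g τ s ≤ 2 * (t - s) := by
    intro τ s t hst
    have hterm : ∀ b : B, 0 ≤ max 0 (t * R b - M τ b) - max 0 (s * R b - M τ b) ∧
        max 0 (t * R b - M τ b) - max 0 (s * R b - M τ b) ≤ (t - s) * R b := by
      intro b
      have hr := (hR b).1
      have hmul : s * R b ≤ t * R b := mul_le_mul_of_nonneg_right hst hr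
      constructor
      · have : max 0 (s * R b - M τ b) ≤ max 0 (t * R b - M τ b) :=
          max_le_max le_rfl (by linarith)
        linarith
      · have h0 : (0:ℝ) ≤ (t - s) * R b := mul_nonneg (by linarith) hr
        have : max 0 (t * R b - M τ b) ≤ max 0 (s * R b - M τ b) + (t - s) * R b := by
          apply max_le
          · positivity
          · nlinarith [le_max_right 0 (s * R b - M τ b)]
        linarith
    have hsum0 : 0 ≤ ∑ b, (max 0 (t * R b - M τ b) - max 0 (s * R b - M τ b)) :=
      Finset.sum_nonneg fun b _ => (hterm b).1
    have hsum1 : ∑ b, (max 0 (t * R b - M τ b) - max 0 (s * R b - M τ b)) ≤ t - s := by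
      calc ∑ b, (max 0 (t * R b - M τ b) - max 0 (s * R b - M τ b))
          ≤ ∑ b, (t - s) * R b := Finset.sum_le_sum fun b _ => (hterm b).2
        _ = t - s := by rw [← Finset.mul_sum, hRsum, mul_one]
    rw [Finset.sum_sub_distrib] at hsum0 hsum1
    constructor <;> simp only [hgdef] <;> linarith
  -- (U): undershoot bound
  have hU : ∀ τ, 1 - p (τ + 1) ≤ max ((p τ - 1) - E τ) (-(E τ) / 2) := by
    intro τ
    have hgq := hgroot (τ + 1)
    have hgp := hgPeval τ
    have hc : g (τ + 1) (p τ) - g (τ + 1) (p (τ + 1)) = 2 * (p τ - 1) - E τ := by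
      rw [hgq, hgp]; linarith [hclear τ]
    rcases le_total (p (τ + 1)) (p τ) with h | h
    · have := (hgmono (τ + 1) (p (τ + 1)) (p τ) h).1
      refine le_trans ?_ (le_max_left _ _)
      linarith
    · have := (hgmono (τ + 1) (p τ) (p (τ + 1)) h).2
      refine le_trans ?_ (le_max_right _ _)
      linarith
  have hU1 : ∀ τ, p τ < 1 → 1 ≤ p (τ + 1) := by
    intro τ h
    have h1 : (p τ - 1) - E τ ≤ 0 := by linarith [hEnn τ]
    have h2 : -(E τ) / 2 ≤ 0 := by linarith [hEnn τ]
    have := max_le h1 h2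
    linarith [hU τ]
  have hU2 : ∀ τ, 1 ≤ p τ → 1 - p (τ + 1) ≤ (p τ - 1) - E τ / 2 := by
    intro τ h
    have h1 : (p τ - 1) - E τ ≤ (p τ - 1) - E τ / 2 := by linarith [hEnn τ]
    have h2 : -(E τ) / 2 ≤ (p τ - 1) - E τ / 2 := by linarith
    have := max_le h1 h2
    linarith [hU τ]
  have hXdrop : ∀ τ, 1 ≤ p τ → X (τ + 2) ≤ X τ - E τ / 2 := by
    intro τ h
    have h1 := hclear τ
    have h2 := hclear (τ + 1)
    have h3 := hU2 τ h
    have : X (τ + 1 + 1) = X (τ + 2) := by norm_num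
    rw [this] at h2
    linarith
  -- Z = max(X τ, X (τ+1)) is nonincreasing
  set Z : ℕ → ℝ := fun τ => max (X τ) (X (τ + 1)) with hZdef
  have hZnn : ∀ τ, 0 ≤ Z τ := fun τ => le_trans (hXnn τ) (le_max_left _ _)
  have hZmono : ∀ τ, Z (τ + 1) ≤ Z τ := by
    intro τ
    have e1 : X (τ + 1 + 1) = X (τ + 2) := by norm_num
    rcases le_or_gt 1 (p τ) with h | h
    · have h1 : X (τ + 1) ≤ X τ := by linarith [hclear τ]
      have h2 : X (τ + 2) ≤ X τ := by linarith [hXdrop τ h, hEnn τ]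
      simp only [hZdef]
      rw [e1]
      exact max_le (le_trans h1 (le_max_left _ _)) (le_trans h2 (le_max_left _ _))
    · have hq := hU1 τ h
      have h2 : X (τ + 2) ≤ X (τ + 1) := by
        have := hclear (τ + 1); rw [e1] at this; linarith
      simp only [hZdef]
      rw [e1]
      exact max_le (le_max_right _ _) (le_trans h2 (le_max_right _ _))
  -- bounds
  have hXp : ∀ τ, X (τ + 1) ≤ p τ := by
    intro τ
    rw [hXsucc τ]
    calc ∑ b, max 0 (p τ * R b - M τ b) ≤ ∑ b, p τ * R b := by
          apply Finset.sum_le_sum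
          intro b _
          apply max_le (mul_nonneg (hp0 τ) (hR b).1)
          have := hMge τ b; have := hm b; linarith
      _ = p τ := by rw [← Finset.mul_sum, hRsum, mul_one]
  set K : ℝ := max (X 0) 1 with hKdef
  have hK1 : (1:ℝ) ≤ K := le_max_right _ _
  have hK : ∀ τ, X τ ≤ K := by
    intro τ
    induction τ with
    | zero => exact le_max_left _ _
    | succ σ ih =>
      have := hXp σ
      have := hclear σ
      linarith
  set A : ℝ := 1 + K with hAdef
  have hA0 : (0:ℝ) ≤ A := by simp only [hAdef]; linarith
  have hpA : ∀ τ, p τ ≤ A := by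
    intro τ
    have := hclear τ
    have := hXnn (τ + 1)
    have := hK τ
    simp only [hAdef]
    linarith
  set n : ℝ := (Fintype.card B : ℝ) with hndef
  have hn0 : 0 ≤ n := by simp only [hndef]; positivity
  -- main quantitative drop lemma
  have hMain : ∀ ε : ℝ, 0 < ε → ε ≤ 1 → ∀ τ, 1 + ε ≤ p τ →
      ε * ε / (n * ε + n * A + 2 * ε + 1) ≤ Z τ - Z (τ + 1) := by
    intro ε hε hε1 τ ha
    set D : ℝ := n * ε + n * A + 2 * ε + 1 with hDdef
    have hD1 : 1 ≤ D := by
      simp only [hDdef]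
      nlinarith [mul_nonneg hn0 (le_of_lt hε), mul_nonneg hn0 hA0]
    have hDpos : 0 < D := by linarith
    set η₀ : ℝ := ε * ε / D with hη₀def
    have hη₀pos : 0 < η₀ := by positivity
    have hη₀ε : η₀ ≤ ε := by
      rw [hη₀def, div_le_iff₀ hDpos]
      nlinarith
    by_contra hcon
    push_neg at hcon
    set η : ℝ := Z τ - Z (τ + 1) with hηdef
    have hηnn : 0 ≤ η := by simp only [hηdef]; linarith [hZmono τ]
    have hηη₀ : η < η₀ := hcon
    have e1 : X (τ + 1 + 1) = X (τ + 2) := by norm_num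
    have ha1 : 1 ≤ p τ := by linarith
    -- s1
    have s1 : X (τ + 1) = X τ - (p τ - 1) := by linarith [hclear τ]
    -- s2 : Z τ = X τ
    have s2 : Z τ = X τ := by
      simp only [hZdef]
      exact max_eq_left (by linarith)
    -- s3 : Z (τ+1) = X (τ+2)
    have hz1 : Z (τ + 1) = max (X (τ + 1)) (X (τ + 2)) := rfl
    have s3 : Z (τ + 1) = X (τ + 2) := by
      rcases max_choice (X (τ + 1)) (X (τ + 2)) with h | h
      · exfalso
        have h1 : Z (τ + 1) = X (τ + 1) := hz1.trans h
        have h2 : η = p τ - 1 := by rw [hηdef, s2, h1, s1]; ring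
        linarith
      · exact hz1.trans h
    have s4 : X (τ + 2) = X τ - η := by
      have := hηdef
      linarith [s2, s3]
    have s5 : E τ ≤ 2 * η := by
      have := hXdrop τ ha1
      linarith
    have s6 : p (τ + 1) = 2 - p τ + η := by
      have h2 := hclear (τ + 1)
      rw [e1] at h2
      linarith
    have s7 : ε ≤ p τ - p (τ + 1) := by linarith
    have hqτ : 0 ≤ p τ - p (τ + 1) := by linarith
    -- s8 pointwise
    have s8 : ∀ b : B, M (τ + 2) b - m b ≤
        max 0 ((M τ b - m b) - (p τ - p (τ + 1)) * R b) := by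
      intro b
      have h1 : M (τ + 2) b - m b = max 0 (p (τ + 1) * R b - M (τ + 1) b) := by
        have := hupd (τ + 1) b
        rw [show τ + 1 + 1 = τ + 2 from rfl] at this
        linarith
      rw [h1]
      apply max_le_max le_rfl
      have h2 : m b + (p τ * R b - M τ b) ≤ M (τ + 1) b := by
        rw [hupd τ b]
        linarith [le_max_right 0 (p τ * R b - M τ b)]
      nlinarith
    -- s9 : each min ≤ η
    have s9 : ∀ b : B, min (M τ b - m b) ((p τ - p (τ + 1)) * R b) ≤ η := by
      intro b
      have hsum : ∑ c, max 0 ((M τ c - m c) - (p τ - p (τ + 1)) * R c) ≥ X τ - η := by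
        calc X τ - η = X (τ + 2) := by linarith [s4]
          _ = ∑ c, (M (τ + 2) c - m c) := by simp only [hXdef]
          _ ≤ ∑ c, max 0 ((M τ c - m c) - (p τ - p (τ + 1)) * R c) :=
              Finset.sum_le_sum fun c _ => s8 c
      have hsum2 : ∑ c, ((M τ c - m c) - max 0 ((M τ c - m c) - (p τ - p (τ + 1)) * R c)) ≤ η := by
        rw [Finset.sum_sub_distrib]
        have : ∑ c, (M τ c - m c) = X τ := by simp only [hXdef]
        linarith
      have hterm : ∀ c : B, (0:ℝ) ≤
          (M τ c - m c) - max 0 ((M τ c - m c) - (p τ - p (τ + 1)) * R c) := by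
        intro c
        rw [aux_min_sub]
        exact le_min (hxnn τ c) (mul_nonneg hqτ (hR c).1)
      have hsingle : (M τ b - m b) - max 0 ((M τ b - m b) - (p τ - p (τ + 1)) * R b)
          ≤ ∑ c, ((M τ c - m c) - max 0 ((M τ c - m c) - (p τ - p (τ + 1)) * R c)) :=
        Finset.single_le_sum (fun c _ => hterm c) (Finset.mem_univ b)
      have hmineq := aux_min_sub (M τ b - m b) ((p τ - p (τ + 1)) * R b)
      linarith
    -- s10 pointwise weighted bound
    have s10 : ∀ b : B, ε * (M τ b - m b) ≤ ε * η + A * η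
        + ε * max 0 ((M τ b - m b) - max 0 (p τ * R b - m b)) := by
      intro b
      have hδnn : (0:ℝ) ≤ max 0 ((M τ b - m b) - max 0 (p τ * R b - m b)) :=
        le_max_left 0 _
      have hxb : M τ b - m b ≤ p τ * R b
          + max 0 ((M τ b - m b) - max 0 (p τ * R b - m b)) := by
        have h1 : (M τ b - m b) - max 0 ((M τ b - m b) - max 0 (p τ * R b - m b))
            = min (M τ b - m b) (max 0 (p τ * R b - m b)) := aux_min_sub _ _
        have h2 : max 0 (p τ * R b - m b) ≤ p τ * R b := by
          apply max_le (mul_nonneg (hp0 τ) (hR b).1)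
          linarith [hm b]
        have h3 := min_le_right (M τ b - m b) (max 0 (p τ * R b - m b))
        linarith [h1 ▸ h3]
      rcases min_cases (M τ b - m b) ((p τ - p (τ + 1)) * R b) with ⟨hmin, hle⟩ | ⟨hmin, hle⟩
      · -- min = x_b ≤ η
        have hxη : M τ b - m b ≤ η := by rw [← hmin]; exact s9 b
        have h1 : ε * (M τ b - m b) ≤ ε * η :=
          mul_le_mul_of_nonneg_left hxη (le_of_lt hε)
        linarith [mul_nonneg hA0 hηnn, mul_nonneg (le_of_lt hε) hδnn]
      · -- min = (a - q) R_b ≤ η, and ε R_b ≤ (a-q) R_b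
        have h4 : (p τ - p (τ + 1)) * R b ≤ η := by rw [← hmin]; exact s9 b
        have h5 : ε * R b ≤ η := le_trans (mul_le_mul_of_nonneg_right s7 (hR b).1) h4
        have h6 : ε * (M τ b - m b) ≤ ε * (p τ * R b)
            + ε * max 0 ((M τ b - m b) - max 0 (p τ * R b - m b)) := by
          have := mul_le_mul_of_nonneg_left hxb (le_of_lt hε)
          rw [mul_add] at this
          linarith
        have h7 : ε * (p τ * R b) ≤ A * η := by
          have h8 : p τ * (ε * R b) ≤ A * η :=
            mul_le_mul (hpA τ) h5 (mul_nonneg (le_of_lt hε) (hR b).1) hA0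
          calc ε * (p τ * R b) = p τ * (ε * R b) := by ring
            _ ≤ A * η := h8
        linarith [mul_nonneg (le_of_lt hε) hηnn]
    -- sum up
    have s11 : ε * X τ ≤ n * (ε * η) + n * (A * η) + ε * E τ := by
      have hsum : ∑ b, (ε * (M τ b - m b)) ≤ ∑ b, (ε * η + A * η
          + ε * max 0 ((M τ b - m b) - max 0 (p τ * R b - m b))) :=
        Finset.sum_le_sum (fun b _ => s10 b)
      rw [← Finset.mul_sum] at hsum
      have hconst : ∑ _b : B, (ε * η + A * η) = n * (ε * η + A * η) := by
        rw [Finset.sum_const, Finset.card_univ, nsmul_eq_mul, hndef]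
      have hsplit : ∑ b, (ε * η + A * η
            + ε * max 0 ((M τ b - m b) - max 0 (p τ * R b - m b)))
          = n * (ε * η + A * η) + ε * E τ := by
        rw [Finset.sum_add_distrib, hconst, ← Finset.mul_sum]
      rw [hsplit] at hsum
      have : ∑ b, (M τ b - m b) = X τ := by simp only [hXdef]
      rw [this] at hsum
      linarith
    have s12 : ε ≤ X τ := by
      have := hclear τ
      have := hXnn (τ + 1)
      linarith
    -- final contradiction
    have s13 : ε * ε ≤ η * (D - 1) := by
      have h1 : ε * ε ≤ ε * X τ := mul_le_mul_of_nonneg_left s12 (le_of_lt hε)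
      have h2 : ε * E τ ≤ ε * (2 * η) := mul_le_mul_of_nonneg_left s5 (le_of_lt hε)
      have h3 : n * (ε * η) + n * (A * η) + ε * (2 * η) = η * (D - 1) := by
        rw [hDdef]; ring
      linarith [s11]
    have s14 : η₀ * D = ε * ε := by
      rw [hη₀def]
      exact div_mul_cancel₀ _ (ne_of_gt hDpos)
    have hfin1 : η * (D - 1) ≤ η₀ * (D - 1) :=
      mul_le_mul_of_nonneg_right (le_of_lt hηη₀) (by linarith)
    have hfin2 : η₀ * (D - 1) = ε * ε - η₀ := by rw [← s14]; ring
    linarith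
  -- final assembly
  rw [Metric.tendsto_atTop]
  intro ε' hε'
  set ε : ℝ := min (ε' / 2) 1 with hεdef
  have hε : 0 < ε := lt_min (by linarith) one_pos
  have hε1 : ε ≤ 1 := min_le_right _ _
  have hεε' : ε < ε' := lt_of_le_of_lt (min_le_left _ _) (by linarith)
  set η₀ : ℝ := ε * ε / (n * ε + n * A + 2 * ε + 1) with hη₀def
  have hDpos : (0:ℝ) < n * ε + n * A + 2 * ε + 1 := by
    linarith [mul_nonneg hn0 (le_of_lt hε), mul_nonneg hn0 hA0]
  have hη₀pos : 0 < η₀ := by rw [hη₀def]; positivity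
  have hant : Antitone Z := antitone_nat_of_succ_le hZmono
  have hbdd : BddBelow (Set.range Z) := by
    refine ⟨0, ?_⟩
    rintro y ⟨τ, rfl⟩
    exact hZnn τ
  have hZtend : Filter.Tendsto Z Filter.atTop (nhds (⨅ τ, Z τ)) :=
    tendsto_atTop_ciInf hant hbdd
  have hZtend' : Filter.Tendsto (fun τ => Z (τ + 1)) Filter.atTop (nhds (⨅ τ, Z τ)) :=
    hZtend.comp (Filter.tendsto_add_atTop_nat 1)
  have hdiff : Filter.Tendsto (fun τ => Z τ - Z (τ + 1)) Filter.atTop (nhds 0) := by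
    have := hZtend.sub hZtend'
    simpa using this
  have hev : ∀ᶠ τ in Filter.atTop, Z τ - Z (τ + 1) < η₀ :=
    (tendsto_order.1 hdiff).2 η₀ hη₀pos
  obtain ⟨N, hN⟩ := Filter.eventually_atTop.1 hev
  refine ⟨N + 1, fun τ hτ => ?_⟩
  have hlt : ∀ σ, N ≤ σ → p σ < 1 + ε := by
    intro σ hσ
    by_contra hcon
    push_neg at hcon
    have h1 := hMain ε hε hε1 σ hcon
    have h2 := hN σ hσ
    rw [← hη₀def] at h1
    linarith
  obtain ⟨σ, rfl⟩ : ∃ σ, τ = σ + 1 := ⟨τ - 1, by omega⟩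
  have hσN : N ≤ σ := by omega
  have h1 : p (σ + 1) < 1 + ε := hlt (σ + 1) (by omega)
  have h2 : 1 - p (σ + 1) ≤ ε := by
    have hu := hU σ
    have hb1 : p σ - 1 - E σ ≤ ε := by linarith [hlt σ hσN, hEnn σ]
    have hb2 : -E σ / 2 ≤ ε := by linarith [hEnn σ]
    linarith [max_le hb1 hb2]
  rw [Real.dist_eq, abs_lt]
  constructor <;> linarith
end

section
/- Let m_b > 0 and R_b > 0 be real numbers and let M*_b be the unique solution of M*_b = m_b + max(0, R_b − M*_b). Then the steady-state frustration under the rights mechanism satisfies f*_b := max(0, (R_b − M*_b)/R_b) = (1/2)·max(0, (R_b − m_b)/R_b) = (1/2)·f^free_b; that is, each buyer's steady-state frustration is exactly half of his free-market frustration, and in particular f*_b ≤ 1/2. -/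
/-- At steady state, each buyer's frustration under the rights
mechanism is exactly half of his free-market frustration; in particular it is
at most `1/2`. -/
theorem steady_state_frustration_half
    (m R Mstar : ℝ) (hm : 0 < m) (hR : 0 < R)
    (hfix : Mstar = m + max 0 (R - Mstar)) :
    max 0 ((R - Mstar) / R) = (1 / 2) * max 0 ((R - m) / R) ∧
    max 0 ((R - Mstar) / R) ≤ 1 / 2 := by
  rcases le_or_gt (R - Mstar) 0 with h | h
  · have hM : Mstar = m := by rw [hfix, max_eq_left h]; ring
    have h1 : (R - Mstar) / R ≤ 0 := div_nonpos_of_nonpos_of_nonneg h hR.le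
    have h2 : (R - m) / R ≤ 0 := by rw [← hM]; exact h1
    rw [max_eq_left h1, max_eq_left h2]
    norm_num
  · have hM : Mstar = (m + R) / 2 := by
      have := hfix
      rw [max_eq_right h.le] at this
      linarith
    have hmR : m < R := by
      have : m < Mstar := by linarith
      linarith [hM ▸ this]
    have e1 : (R - Mstar) / R = (1 / 2) * ((R - m) / R) := by
      rw [hM]; field_simp; ring
    have h2 : 0 ≤ (R - m) / R := div_nonneg (by linarith) hR.le
    have h1 : 0 ≤ (R - Mstar) / R := by rw [e1]; positivity
    rw [max_eq_right h1, max_eq_right h2, e1]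
    refine ⟨rfl, ?_⟩
    have : (R - m) / R ≤ 1 := by
      rw [div_le_one hR]; linarith
    linarith [e1, this]
end
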